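/- arXiv:1611.06739 — 3 statements merged into one kernel-verified Lean document; each statement's English description precedes it below -/
import Mathlib

section
/- If I ⊆ {1,…,m} satisfies |I| > h, then I ∈ 𝒳 (i.e., H_I is rejected by the closed testing procedure with Simes local tests). -/
open Finset

attribute [local instance] Classical.propDecidable

/-- The `i`-th smallest (1-indexed) element of the multiset of p-values `{p_j : j ∈ I}`. -/
noncomputable def pOrd {m : ℕ} (p : Fin m → ℝ) (I : Finset (Fin m)) (i : ℕ) : ℝ :=
  ((I.val.map p).sort (· ≤ ·)).getD (i - 1) 0

/-- The Simes local test rejects `H_I` (written `I ∈ 𝒰`) iff `I` is nonempty and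
`|I|·p_{(i:I)} ≤ i·α` for at least one `1 ≤ i ≤ |I|`. -/
def SimesU {m : ℕ} (α : ℝ) (p : Fin m → ℝ) (I : Finset (Fin m)) : Prop :=
  ∃ i, 1 ≤ i ∧ i ≤ I.card ∧ (I.card : ℝ) * pOrd p I i ≤ (i : ℝ) * α

/-- Closed testing rejects `H_I` (written `I ∈ 𝒳`) iff `J ∈ 𝒰` for every `J ⊇ I`. -/
def ClosedX {m : ℕ} (α : ℝ) (p : Fin m → ℝ) (I : Finset (Fin m)) : Prop :=
  ∀ J, I ⊆ J → SimesU α p J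

/-- `K_i = {r_{m−i+1},…,r_m}`: the `i` indices with largest p-values. -/
def Kset {m : ℕ} (r : Fin m → Fin m) (i : ℕ) : Finset (Fin m) :=
  (Finset.univ.filter fun j : Fin m => m - i ≤ (j : ℕ)).image r

/-- `L_i = {r_1,…,r_i}`: the `i` indices with smallest p-values. -/
def Lset {m : ℕ} (r : Fin m → Fin m) (i : ℕ) : Finset (Fin m) :=
  (Finset.univ.filter fun j : Fin m => (j : ℕ) < i).image r

/-- `h = max{0 ≤ i ≤ m : K_i ∉ 𝒰}`. -/
noncomputable def hval {m : ℕ} (α : ℝ) (p : Fin m → ℝ) (r : Fin m → Fin m) : ℕ :=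
  sSup {i | i ≤ m ∧ ¬ SimesU α p (Kset r i)}

/-- `t(S) = max{|I| : I ⊆ S, I ∉ 𝒳}`. -/
noncomputable def tval {m : ℕ} (α : ℝ) (p : Fin m → ℝ) (S : Finset (Fin m)) : ℕ :=
  sSup {k | ∃ I, I ⊆ S ∧ ¬ ClosedX α p I ∧ I.card = k}

/-- `d(S) = |S| − t(S)`. -/
noncomputable def dval {m : ℕ} (α : ℝ) (p : Fin m → ℝ) (S : Finset (Fin m)) : ℕ :=
  S.card - tval α p S

/-- `q_α(S) = t(S)/|S|` for nonempty `S`, and `0` for `S = ∅`. -/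
noncomputable def qval {m : ℕ} (α : ℝ) (p : Fin m → ℝ) (S : Finset (Fin m)) : ℝ :=
  if S = ∅ then 0 else (tval α p S : ℝ) / S.card

/-- `z = 0` if `h = m`, else `z = min{m−h ≤ i ≤ m : h·p_{(i)} ≤ (i−m+h+1)·α}`. -/
noncomputable def zval {m : ℕ} (α : ℝ) (p : Fin m → ℝ) (r : Fin m → Fin m) : ℕ :=
  if hval α p r = m then 0 else
    sInf {i | m - hval α p r ≤ i ∧ i ≤ m ∧
      (hval α p r : ℝ) * pOrd p Finset.univ i ≤ ((i : ℝ) - m + hval α p r + 1) * α}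

/-- `b_q = max{1 ≤ i ≤ m : m·p_{(i)} ≤ i·q}` (with `b_q = 0` if no such `i`). -/
noncomputable def bval {m : ℕ} (q : ℝ) (p : Fin m → ℝ) : ℕ :=
  sSup {i | 1 ≤ i ∧ i ≤ m ∧ (m : ℝ) * pOrd p Finset.univ i ≤ (i : ℝ) * q}

/-!
A set `K` of size `i` whose p-values all dominate those outside it has, for every `k`, the
largest possible `k`-th order statistic among sets of size at least `i`: if `x = p_{(k:K)}`, the
only indices with p-value above `x` lie in `K`, at most `i - k` of them. So `J ∈ 𝒰` as soon as
`K_{|J|} ∈ 𝒰`, and by the definition of `h` this holds for every `J` with `|J| > h`, in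
particular for every superset of `I`.
-/

theorem List.SortedLE.getElem_le_iff_lt_length_filter {α : Type*} [LinearOrder α] {l : List α}
    (hl : l.SortedLE) {n : ℕ} (hn : n < l.length) (x : α) :
    l[n] ≤ x ↔ n < (l.filter fun y => decide (y ≤ x)).length := by
  constructor
  · intro h
    have hprefix : ∀ a ∈ l.take (n + 1), a ≤ x := by
      intro a ha
      obtain ⟨j, hj, rfl⟩ := List.mem_iff_getElem.mp ha
      rw [List.getElem_take]
      exact (hl.getElem_le_getElem_of_le (by rw [List.length_take] at hj; omega)).trans h
    calc n < (l.take (n + 1)).length := by rw [List.length_take]; omega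
      _ = ((l.take (n + 1)).filter fun y => decide (y ≤ x)).length := by
        rw [List.filter_eq_self.mpr (by simpa using hprefix)]
      _ ≤ _ := ((List.take_sublist _ _).filter _).length_le
  · intro h
    by_contra! hx
    have hsuffix : (l.drop n).filter (fun y => decide (y ≤ x)) = [] := by
      rw [List.filter_eq_nil_iff]
      intro a ha
      obtain ⟨j, hj, rfl⟩ := List.mem_iff_getElem.mp ha
      rw [List.getElem_drop]
      simpa using hx.trans_le (hl.getElem_le_getElem_of_le (by omega))
    rw [← List.take_append_drop n l, List.filter_append, hsuffix, List.append_nil] at h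
    have := (List.filter_sublist (p := fun y => decide (y ≤ x)) (l := l.take n)).length_le
    rw [List.length_take] at this
    omega

theorem length_filter_sort_map {m : ℕ} (p : Fin m → ℝ) (J : Finset (Fin m)) (x : ℝ) :
    (((J.val.map p).sort (· ≤ ·)).filter fun y => decide (y ≤ x)).length
      = #{j ∈ J | p j ≤ x} := by
  rw [← List.countP_eq_length_filter, ← Multiset.coe_countP, Multiset.sort_eq,
    Multiset.countP_map]
  rfl

theorem pOrd_le_iff {m : ℕ} (p : Fin m → ℝ) (J : Finset (Fin m)) {k : ℕ} (hk1 : 1 ≤ k)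
    (hk : k ≤ #J) (x : ℝ) : pOrd p J k ≤ x ↔ k ≤ #{j ∈ J | p j ≤ x} := by
  have hsorted : ((J.val.map p).sort (· ≤ ·)).SortedLE := (Multiset.pairwise_sort _ _).sortedLE
  have hlen : ((J.val.map p).sort (· ≤ ·)).length = #J := by simp
  rw [pOrd, List.getD_eq_getElem _ _ (by omega), hsorted.getElem_le_iff_lt_length_filter,
    length_filter_sort_map]
  omega

theorem pOrd_le_pOrd_of_forall_le {m : ℕ} (p : Fin m → ℝ) {J K : Finset (Fin m)}
    (hKJ : #K ≤ #J) (hK : ∀ a ∉ K, ∀ b ∈ K, p a ≤ p b) {k : ℕ} (hk1 : 1 ≤ k)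
    (hk : k ≤ #K) : pOrd p J k ≤ pOrd p K k := by
  set x := pOrd p K k
  have hKx : k ≤ #{j ∈ K | p j ≤ x} := (pOrd_le_iff p K hk1 hk x).mp le_rfl
  obtain ⟨b, hb⟩ : ({j ∈ K | p j ≤ x}).Nonempty := card_pos.mp (by omega)
  rw [mem_filter] at hb
  have hJK : #{j ∈ J | ¬p j ≤ x} ≤ #{j ∈ K | ¬p j ≤ x} := by
    refine card_le_card fun a ha => ?_
    rw [mem_filter] at ha ⊢
    refine ⟨?_, ha.2⟩
    by_contra haK
    exact ha.2 ((hK a haK b hb.1).trans hb.2)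
  have hJ := card_filter_add_card_filter_not (s := J) (fun j => p j ≤ x)
  have hK' := card_filter_add_card_filter_not (s := K) (fun j => p j ≤ x)
  rw [pOrd_le_iff p J hk1 (by omega)]
  omega

theorem SimesU.of_card_eq_of_forall_le {m : ℕ} {α : ℝ} {p : Fin m → ℝ}
    {J K : Finset (Fin m)} (hU : SimesU α p K) (hKJ : #K = #J)
    (hK : ∀ a ∉ K, ∀ b ∈ K, p a ≤ p b) :
    SimesU α p J := by
  obtain ⟨k, hk1, hk, hrej⟩ := hU
  refine ⟨k, hk1, hKJ ▸ hk, ?_⟩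
  calc (#J : ℝ) * pOrd p J k ≤ #K * pOrd p K k := by
        rw [hKJ]; gcongr; exact pOrd_le_pOrd_of_forall_le p hKJ.le hK hk1 hk
    _ ≤ k * α := hrej

section Kset

variable {m : ℕ} {r : Fin m → Fin m}

theorem card_Kset (hr : Function.Injective r) {i : ℕ} (hi : i ≤ m) : #(Kset r i) = i := by
  have hsplit := card_filter_add_card_filter_not (s := univ) fun j : Fin m => (j : ℕ) < m - i
  simp only [Fin.card_filter_val_lt, card_univ, Fintype.card_fin, not_lt] at hsplit
  rw [Kset, card_image_of_injective _ hr]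
  omega

theorem le_of_notMem_Kset_of_mem_Kset {p : Fin m → ℝ} (hr : Function.Surjective r)
    (hmono : ∀ i j : Fin m, i ≤ j → p (r i) ≤ p (r j)) (i : ℕ) :
    ∀ a ∉ Kset r i, ∀ b ∈ Kset r i, p a ≤ p b := by
  intro a ha b hb
  obtain ⟨s, rfl⟩ := hr a
  obtain ⟨t, ht, rfl⟩ := mem_image.mp hb
  have hs : ¬m - i ≤ (s : ℕ) := fun hs =>
    ha (mem_image_of_mem r (mem_filter.mpr ⟨mem_univ s, hs⟩))
  exact hmono s t (Fin.le_def.mpr (by have := (mem_filter.mp ht).2; omega))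

theorem SimesU_Kset_of_hval_lt {α : ℝ} {p : Fin m → ℝ} {i : ℕ} (hi : hval α p r < i)
    (him : i ≤ m) : SimesU α p (Kset r i) := by
  by_contra hU
  exact (le_csSup ⟨m, fun n hn => hn.1⟩ ⟨him, hU⟩ : i ≤ hval α p r).not_gt hi

end Kset

theorem stmt0_general
    (m : ℕ) (α : ℝ)
    (p : Fin m → ℝ)
    (r : Fin m → Fin m) (hr : Function.Bijective r)
    (hmono : ∀ i j : Fin m, i ≤ j → p (r i) ≤ p (r j))
    (I : Finset (Fin m)) (hI : hval α p r < I.card) :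
    ClosedX α p I := by
  intro J hIJ
  have hJm : #J ≤ m := (card_le_univ J).trans_eq (Fintype.card_fin m)
  have hhJ : hval α p r < #J := hI.trans_le (card_le_card hIJ)
  exact (SimesU_Kset_of_hval_lt hhJ hJm).of_card_eq_of_forall_le (card_Kset hr.1 hJm)
    (le_of_notMem_Kset_of_mem_Kset hr.2 hmono _)

theorem stmt0
    (m : ℕ) (hm : 1 ≤ m) (α : ℝ) (hα : 0 ≤ α ∧ α ≤ 1)
    (p : Fin m → ℝ) (hp : ∀ i, 0 ≤ p i ∧ p i ≤ 1)
    (r : Fin m → Fin m) (hr : Function.Bijective r)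
    (hmono : ∀ i j : Fin m, i ≤ j → p (r i) ≤ p (r j))
    (I : Finset (Fin m)) (hI : hval α p r < I.card) :
    ClosedX α p I :=
  stmt0_general m α p r hr hmono I hI
end

section
/- The concentration set Z is minimal: if Y ⊆ {1,…,m} satisfies d(S) = d(S ∩ Y) for every S ⊆ {1,…,m}, then Z ⊆ Y. -/
open Finset

attribute [local instance] Classical.propDecidable

/-!
Write `h`, `z` and `Z = L_z` as in the statement and let `x ∈ Z`. A set `J` with `|J| > h` is
rejected by the Simes test, because its order statistics are dominated by those of `K_{|J|}`.
A set `J` with `|J| ≤ h` containing at least `z - (m - h) + 1` elements of `Z` is rejected at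
that index by the inequality defining `z`. Hence `t(Z) ≤ z - (m - h)`. Conversely, the
minimality of `z` together with `K_h ∉ 𝒰` shows that `K_{h+1}` with one element of rank in
`[m - h, z]` removed is accepted, which yields a non-rejected subset of `Z \ {x}` of size
`z - (m - h)`. So `d(Z \ {x}) < d(Z)`, and since `d` is monotone, a `Y` with `d(Z) = d(Z ∩ Y)`
must contain `x`.
-/

theorem List.Pairwise.getD_le_iff_lt_countP {β : Type*} [LinearOrder β] {l : List β}
    (hl : l.Pairwise (· ≤ ·)) {i : ℕ} (hi : i < l.length) (d v : β) :
    l.getD i d ≤ v ↔ i < l.countP (· ≤ v) := by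
  induction l generalizing i with
  | nil => simp at hi
  | cons a t ih =>
    rw [List.pairwise_cons] at hl
    by_cases hav : a ≤ v
    · cases i with
      | zero => simp [hav]
      | succ i => simpa [List.countP_cons, hav] using ih hl.2 (by simpa using hi)
    · have ht : t.countP (· ≤ v) = 0 :=
        List.countP_eq_zero.2 fun x hx hxv => hav ((hl.1 x hx).trans (by simpa using hxv))
      cases i with
      | zero => simp [hav, ht]
      | succ i =>
        rw [List.getD_cons_succ, ih hl.2 (by simpa using hi)]
        simp [hav, ht]

section OrderStatistics

variable {m : ℕ} (p : Fin m → ℝ) (I : Finset (Fin m)) {k : ℕ}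

theorem pOrd_le_iff_s8 (hk1 : 1 ≤ k) (hk2 : k ≤ I.card) (v : ℝ) :
    pOrd p I k ≤ v ↔ k ≤ (I.filter fun x => p x ≤ v).card := by
  have hlen : ((I.val.map p).sort (· ≤ ·)).length = I.card := by simp
  rw [pOrd, List.Pairwise.getD_le_iff_lt_countP (Multiset.pairwise_sort _ _) (by omega) 0,
    ← Multiset.coe_countP, Multiset.sort_eq, Multiset.countP_map, Finset.card_def,
    Finset.filter_val]
  omega

variable {p I}

theorem pOrd_le (hk1 : 1 ≤ k) {v : ℝ} (h : k ≤ (I.filter fun x => p x ≤ v).card) :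
    pOrd p I k ≤ v :=
  (pOrd_le_iff_s8 p I hk1 (h.trans (card_filter_le _ _)) v).2 h

theorem le_pOrd (hk1 : 1 ≤ k) (hk2 : k ≤ I.card) {w : ℝ}
    (h : (I.filter fun x => p x < w).card < k) : w ≤ pOrd p I k := by
  by_contra! hlt
  have hcount := (pOrd_le_iff_s8 p I hk1 hk2 _).1 le_rfl
  have : (I.filter fun x => p x ≤ pOrd p I k).card ≤ (I.filter fun x => p x < w).card :=
    card_le_card fun x hx => by
      simp only [mem_filter] at hx ⊢
      exact ⟨hx.1, hx.2.trans_lt hlt⟩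
  omega

theorem pOrd_nonneg (hp : ∀ i, 0 ≤ p i) (hk1 : 1 ≤ k) (hk2 : k ≤ I.card) : 0 ≤ pOrd p I k :=
  le_pOrd hk1 hk2 (by rw [filter_false_of_mem fun x _ => not_lt.2 (hp x), card_empty]; exact hk1)

end OrderStatistics

section Positions

variable {m : ℕ} {p : Fin m → ℝ} {r : Fin m → Fin m}

theorem mem_Lset {i : ℕ} {x : Fin m} : x ∈ Lset r i ↔ ∃ j : Fin m, (j : ℕ) < i ∧ r j = x := by
  simp [Lset]

theorem Lset_mono {a b : ℕ} (hab : a ≤ b) : Lset r a ⊆ Lset r b := fun x hx => by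
  obtain ⟨j, hj, rfl⟩ := mem_Lset.1 hx
  exact mem_Lset.2 ⟨j, by omega, rfl⟩

theorem card_Lset (hr : Function.Injective r) {i : ℕ} (hi : i ≤ m) : (Lset r i).card = i := by
  rw [Lset, card_image_of_injective _ hr]
  convert (Fin.card_filter_val_lt (n := m) (m := i)).trans (min_eq_right hi)

theorem Kset_eq_compl_Lset (hr : Function.Bijective r) (s : ℕ) :
    Kset r s = (Lset r (m - s))ᶜ := by
  ext x
  obtain ⟨j, rfl⟩ := hr.surjective x
  simp [Kset, Lset, hr.injective.eq_iff]

theorem card_Kset_s8 (hr : Function.Bijective r) {s : ℕ} (hs : s ≤ m) : (Kset r s).card = s := by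
  rw [Kset_eq_compl_Lset hr s, card_compl, Fintype.card_fin, card_Lset hr.injective (by omega)]
  omega

theorem card_Kset_inter_Lset (hr : Function.Bijective r) {s n : ℕ}
    (hsn : m - s ≤ n) (hn : n ≤ m) : (Kset r s ∩ Lset r n).card = n - (m - s) := by
  rw [Kset_eq_compl_Lset hr s, inter_comm, ← sdiff_eq_inter_compl,
    card_sdiff_of_subset (Lset_mono hsn), card_Lset hr.injective hn,
    card_Lset hr.injective (by omega)]

theorem mem_Lset_of_lt (hr : Function.Bijective r) (hmono : Monotone (p ∘ r)) {x : Fin m}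
    {a : Fin m} (h : p x < p (r a)) : x ∈ Lset r a := by
  obtain ⟨j, rfl⟩ := hr.surjective x
  exact mem_Lset.2 ⟨j, lt_of_not_ge fun hj => h.not_ge (hmono (Fin.le_def.2 hj)), rfl⟩

theorem le_of_mem_Lset_succ (hmono : Monotone (p ∘ r)) {x a : Fin m}
    (hx : x ∈ Lset r (a + 1)) : p x ≤ p (r a) := by
  obtain ⟨j, hj, rfl⟩ := mem_Lset.1 hx
  exact hmono (Fin.le_def.2 (by omega))

theorem pOrd_le_of_le_card_inter_Lset (hmono : Monotone (p ∘ r)) {J : Finset (Fin m)}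
    {k : ℕ} {a : Fin m} (hk : 1 ≤ k) (h : k ≤ (J ∩ Lset r (a + 1)).card) :
    pOrd p J k ≤ p (r a) := by
  refine pOrd_le hk (h.trans (card_le_card fun x hx => ?_))
  rw [mem_inter] at hx
  exact mem_filter.2 ⟨hx.1, le_of_mem_Lset_succ hmono hx.2⟩

theorem le_pOrd_of_card_inter_Lset_lt (hr : Function.Bijective r) (hmono : Monotone (p ∘ r))
    {J : Finset (Fin m)} {k : ℕ} {a : Fin m} (hk1 : 1 ≤ k) (hk2 : k ≤ J.card)
    (h : (J ∩ Lset r a).card < k) : p (r a) ≤ pOrd p J k := by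
  refine le_pOrd hk1 hk2 (lt_of_le_of_lt (card_le_card fun x hx => ?_) h)
  rw [mem_filter] at hx
  exact mem_inter.2 ⟨hx.1, mem_Lset_of_lt hr hmono hx.2⟩

-- Positions `a : Fin m` are 0-indexed: `r a` carries the `(a + 1)`-th smallest p-value.
theorem pOrd_Kset (hr : Function.Bijective r) (hmono : Monotone (p ∘ r)) {s k : ℕ}
    (hs : s ≤ m) (hk1 : 1 ≤ k) (hks : k ≤ s) {a : Fin m} (ha : (a : ℕ) + 1 = m - s + k) :
    pOrd p (Kset r s) k = p (r a) := by
  apply le_antisymm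
  · refine pOrd_le_of_le_card_inter_Lset hmono hk1 ?_
    rw [card_Kset_inter_Lset hr (by omega) (by omega)]
    omega
  · refine le_pOrd_of_card_inter_Lset_lt hr hmono hk1 (by rw [card_Kset_s8 hr hs]; exact hks) ?_
    rw [card_Kset_inter_Lset hr (by omega) (by omega)]
    omega

theorem pOrd_univ (hr : Function.Bijective r) (hmono : Monotone (p ∘ r)) {i : ℕ} (hi1 : 1 ≤ i)
    (hi : i ≤ m) {a : Fin m} (ha : (a : ℕ) + 1 = i) : pOrd p univ i = p (r a) := by
  have hK : Kset r m = univ := by simp [Kset_eq_compl_Lset hr m, Lset]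
  rw [← hK, pOrd_Kset hr hmono le_rfl hi1 hi (a := a) (by omega)]

theorem pOrd_le_pOrd_Kset (hr : Function.Bijective r) (hmono : Monotone (p ∘ r))
    {J : Finset (Fin m)} {k : ℕ} (hk1 : 1 ≤ k) (hk2 : k ≤ J.card) :
    pOrd p J k ≤ pOrd p (Kset r J.card) k := by
  have hJm : J.card ≤ m := by simpa using card_le_univ J
  have ha : m - J.card + k - 1 < m := by omega
  rw [pOrd_Kset hr hmono hJm hk1 hk2 (a := ⟨_, ha⟩) (by simp only; omega)]
  refine pOrd_le_of_le_card_inter_Lset hmono hk1 ?_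
  rw [show ((⟨_, ha⟩ : Fin m) : ℕ) + 1 = m - J.card + k by simp only; omega]
  have hsplit := card_sdiff_add_card_inter J (Lset r (m - J.card + k))
  have hout : (J \ Lset r (m - J.card + k)).card ≤ J.card - k := by
    calc (J \ Lset r (m - J.card + k)).card ≤ (Lset r (m - J.card + k))ᶜ.card :=
          card_le_card fun x hx => mem_compl.2 (mem_sdiff.1 hx).2
      _ = J.card - k := by
          rw [card_compl, Fintype.card_fin, card_Lset hr.injective (by omega)]; omega
  omega

end Positions

section Simes

variable {m : ℕ} {α : ℝ} {p : Fin m → ℝ}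

theorem not_simesU_empty : ¬ SimesU α p (∅ : Finset (Fin m)) := by
  rintro ⟨i, hi1, hi2, -⟩
  simp at hi2
  omega

theorem SimesU.of_pOrd_le {J J' : Finset (Fin m)} (hcard : J.card = J'.card)
    (hle : ∀ k, 1 ≤ k → k ≤ J.card → pOrd p J k ≤ pOrd p J' k) (h : SimesU α p J') :
    SimesU α p J := by
  obtain ⟨k, hk1, hk2, hk⟩ := h
  refine ⟨k, hk1, hcard ▸ hk2, ?_⟩
  rw [hcard]
  exact (mul_le_mul_of_nonneg_left (hle k hk1 (hcard ▸ hk2)) (Nat.cast_nonneg _)).trans hk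

theorem not_closedX_empty : ¬ ClosedX α p (∅ : Finset (Fin m)) :=
  fun h => not_simesU_empty (h ∅ subset_rfl)

theorem not_closedX_of_subset {I I' : Finset (Fin m)} (h : I' ⊆ I) (hI : ¬ ClosedX α p I) :
    ¬ ClosedX α p I' :=
  fun hC => hI fun J hJ => hC J (h.trans hJ)

end Simes

section Depth

variable {m : ℕ} {α : ℝ} {p : Fin m → ℝ} {S T I : Finset (Fin m)}

theorem bddAbove_tval_set (S : Finset (Fin m)) :
    BddAbove {k | ∃ I, I ⊆ S ∧ ¬ ClosedX α p I ∧ I.card = k} :=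
  ⟨S.card, by rintro k ⟨I, hIS, -, rfl⟩; exact card_le_card hIS⟩

theorem exists_card_eq_tval (α : ℝ) (p : Fin m → ℝ) (S : Finset (Fin m)) :
    ∃ I, I ⊆ S ∧ ¬ ClosedX α p I ∧ I.card = tval α p S :=
  Nat.sSup_mem (s := {k | ∃ I, I ⊆ S ∧ ¬ ClosedX α p I ∧ I.card = k})
    ⟨0, ∅, empty_subset S, not_closedX_empty, card_empty⟩ (bddAbove_tval_set S)

theorem card_le_tval (hIS : I ⊆ S) (hI : ¬ ClosedX α p I) : I.card ≤ tval α p S :=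
  le_csSup (bddAbove_tval_set S) ⟨I, hIS, hI, rfl⟩

theorem tval_le_card (α : ℝ) (p : Fin m → ℝ) (S : Finset (Fin m)) : tval α p S ≤ S.card := by
  obtain ⟨I, hIS, -, hI⟩ := exists_card_eq_tval α p S
  exact hI ▸ card_le_card hIS

theorem dval_mono (h : T ⊆ S) : dval α p T ≤ dval α p S := by
  obtain ⟨I, hIS, hI, hcard⟩ := exists_card_eq_tval α p S
  have hIT : (I ∩ T).card ≤ tval α p T :=
    card_le_tval inter_subset_right (not_closedX_of_subset inter_subset_left hI)
  have hsplit := card_inter_add_card_sdiff I T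
  have hout : (I \ T).card ≤ (S \ T).card := card_le_card (sdiff_subset_sdiff hIS subset_rfl)
  have hST := card_sdiff_of_subset h
  have := tval_le_card α p T
  have := card_le_card h
  unfold dval
  omega

theorem mem_of_dval_erase_lt {Y : Finset (Fin m)} {x : Fin m}
    (hY : dval α p S = dval α p (S ∩ Y)) (hlt : dval α p (S.erase x) < dval α p S) : x ∈ Y := by
  by_contra hxY
  have : S ∩ Y ⊆ S.erase x := fun y hy =>
    mem_erase.2 ⟨fun h => hxY (h ▸ (mem_inter.1 hy).2), (mem_inter.1 hy).1⟩
  exact (dval_mono this).not_gt (hY ▸ hlt)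

end Depth

section Threshold

variable {m : ℕ} {α : ℝ} {p : Fin m → ℝ} {r : Fin m → Fin m}

theorem hval_spec (α : ℝ) (p : Fin m → ℝ) (r : Fin m → Fin m) :
    hval α p r ≤ m ∧ ¬ SimesU α p (Kset r (hval α p r)) := by
  have hK0 : Kset r 0 = ∅ := by ext; simp [Kset]
  exact Nat.sSup_mem (s := {i | i ≤ m ∧ ¬ SimesU α p (Kset r i)})
    ⟨0, Nat.zero_le m, hK0 ▸ not_simesU_empty⟩ ⟨m, fun i hi => hi.1⟩

theorem simesU_Kset_of_hval_lt {i : ℕ} (h1 : hval α p r < i) (h2 : i ≤ m) :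
    SimesU α p (Kset r i) := by
  by_contra hcon
  exact h1.not_ge (le_csSup ⟨m, fun i hi => hi.1⟩ ⟨h2, hcon⟩)

theorem simesU_of_hval_lt_card (hr : Function.Bijective r) (hmono : Monotone (p ∘ r))
    {J : Finset (Fin m)} (hJ : hval α p r < J.card) : SimesU α p J := by
  have hJm : J.card ≤ m := by simpa using card_le_univ J
  exact SimesU.of_pOrd_le (card_Kset_s8 hr hJm).symm
    (fun k hk1 hk2 => pOrd_le_pOrd_Kset hr hmono hk1 hk2) (simesU_Kset_of_hval_lt hJ hJm)

theorem zval_set_nonempty (hp : ∀ i, 0 ≤ p i) (hr : Function.Bijective r)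
    (hmono : Monotone (p ∘ r)) (hhm : hval α p r < m) :
    {i | m - hval α p r ≤ i ∧ i ≤ m ∧
      (hval α p r : ℝ) * pOrd p univ i ≤ ((i : ℝ) - m + hval α p r + 1) * α}.Nonempty := by
  set h := hval α p r
  replace hhm : h + 1 ≤ m := hhm
  obtain ⟨k, hk1, hk2, hk⟩ := simesU_Kset_of_hval_lt (r := r) (lt_add_one h) hhm
  rw [card_Kset_s8 hr hhm] at hk2 hk
  let a : Fin m := ⟨m - (h + 1) + k - 1, by omega⟩
  have hKa : pOrd p (Kset r (h + 1)) k = p (r a) :=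
    pOrd_Kset hr hmono hhm hk1 hk2 (by simp only [a]; omega)
  have hua : pOrd p univ (m - (h + 1) + k) = p (r a) :=
    pOrd_univ hr hmono (by omega) (by omega) (by simp only [a]; omega)
  refine ⟨m - (h + 1) + k, by omega, by omega, ?_⟩
  have hcast : ((m - (h + 1) + k : ℕ) : ℝ) - m + h + 1 = k := by
    push_cast [Nat.cast_sub hhm]; ring
  rw [hua, hcast]
  rw [hKa] at hk
  push_cast at hk
  nlinarith [hp (r a)]

theorem zval_spec (hp : ∀ i, 0 ≤ p i) (hr : Function.Bijective r) (hmono : Monotone (p ∘ r))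
    (hhm : hval α p r < m) :
    m - hval α p r ≤ zval α p r ∧ zval α p r ≤ m ∧
      (hval α p r : ℝ) * pOrd p univ (zval α p r)
        ≤ ((zval α p r : ℝ) - m + hval α p r + 1) * α := by
  rw [zval, if_neg hhm.ne]
  exact Nat.sInf_mem (zval_set_nonempty hp hr hmono hhm)

theorem lt_mul_pOrd_of_lt_zval (hhm : hval α p r < m) {i : ℕ} (hi : m - hval α p r ≤ i)
    (hiz : i < zval α p r) (hzm : zval α p r ≤ m) :
    ((i : ℝ) - m + hval α p r + 1) * α < hval α p r * pOrd p univ i := by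
  rw [zval, if_neg hhm.ne] at hiz hzm
  by_contra! hcon
  exact Nat.notMem_of_lt_sInf hiz ⟨hi, by omega, hcon⟩

theorem not_simesU_Kset_succ_erase (hr : Function.Bijective r) (hmono : Monotone (p ∘ r))
    {h z : ℕ} (hhm : h < m) (hKh : ¬ SimesU α p (Kset r h))
    (hz : ∀ i, m - h ≤ i → i < z → ((i : ℝ) - m + h + 1) * α < h * pOrd p univ i)
    {y : Fin m} (hyz : y ∈ Lset r z) (hyh : y ∉ Lset r (m - (h + 1))) :
    ¬ SimesU α p ((Kset r (h + 1)).erase y) := by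
  obtain ⟨j, hjz, rfl⟩ := mem_Lset.1 hyz
  have hjh : m - (h + 1) ≤ j := by
    by_contra hj
    exact hyh (mem_Lset.2 ⟨j, by omega, rfl⟩)
  have hyK : r j ∈ Kset r (h + 1) := by
    rw [Kset_eq_compl_Lset hr]
    exact mem_compl.2 hyh
  set J := (Kset r (h + 1)).erase (r j)
  rintro ⟨k, hk1, hk2, hk⟩
  have hJ : J.card = h := by rw [card_erase_of_mem hyK, card_Kset_s8 hr hhm]; rfl
  rw [hJ] at hk2 hk
  suffices ∃ b : Fin m, p (r b) ≤ pOrd p J k ∧ k * α < h * p (r b) by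
    obtain ⟨b, hb, hbk⟩ := this
    linarith [mul_le_mul_of_nonneg_left hb (Nat.cast_nonneg (α := ℝ) h)]
  -- `b` is the position of the `k`-th smallest element of `J`: it is compared with the full
  -- sample (minimality of `z`) if it lies below `y`, and with `K_h` otherwise.
  by_cases hkj : m - (h + 1) + k ≤ j
  · refine ⟨⟨m - (h + 1) + k - 1, by omega⟩, ?_, ?_⟩
    · refine le_pOrd_of_card_inter_Lset_lt hr hmono hk1 (hJ ▸ hk2) ?_
      calc (J ∩ Lset r (m - (h + 1) + k - 1)).card
          ≤ (Kset r (h + 1) ∩ Lset r (m - (h + 1) + k - 1)).card :=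
            card_le_card (inter_subset_inter_right (erase_subset _ _))
        _ < k := by rw [card_Kset_inter_Lset hr (by omega) (by omega)]; omega
    · have hi := hz (m - (h + 1) + k) (by omega) (by omega)
      rw [pOrd_univ hr hmono (by omega) (by omega) (a := ⟨m - (h + 1) + k - 1, by omega⟩)
        (by simp only; omega)] at hi
      convert hi using 2
      push_cast [Nat.cast_sub hhm]
      ring
  · refine ⟨⟨m - (h + 1) + k, by omega⟩, ?_, ?_⟩
    · refine le_pOrd_of_card_inter_Lset_lt hr hmono hk1 (hJ ▸ hk2) ?_
      have hyL : r j ∈ Kset r (h + 1) ∩ Lset r (m - (h + 1) + k) :=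
        mem_inter.2 ⟨hyK, mem_Lset.2 ⟨j, by omega, rfl⟩⟩
      rw [erase_inter, card_erase_of_mem hyL, card_Kset_inter_Lset hr (by omega) (by omega)]
      omega
    · have hKk : pOrd p (Kset r h) k = p (r ⟨m - (h + 1) + k, by omega⟩) :=
        pOrd_Kset hr hmono hhm.le hk1 hk2 (by simp only; omega)
      by_contra! hcon
      exact hKh ⟨k, hk1, by rwa [card_Kset_s8 hr hhm.le], by rwa [card_Kset_s8 hr hhm.le, hKk]⟩

end Threshold

section Concentration

variable {m : ℕ} {α : ℝ} {p : Fin m → ℝ} {r : Fin m → Fin m}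

theorem tval_Lset_le (hp : ∀ i, 0 ≤ p i) (hr : Function.Bijective r) (hmono : Monotone (p ∘ r))
    {z : ℕ} (hz1 : m - hval α p r ≤ z) (hzm : z ≤ m) (hz : (hval α p r : ℝ) * pOrd p univ z
      ≤ ((z : ℝ) - m + hval α p r + 1) * α) :
    tval α p (Lset r z) ≤ z - (m - hval α p r) := by
  set h := hval α p r
  have hhm : h ≤ m := (hval_spec α p r).1
  obtain ⟨I, hIL, hIX, hI⟩ := exists_card_eq_tval α p (Lset r z)
  by_contra! hgt
  have hIz : I.card ≤ z := card_Lset hr.injective hzm ▸ card_le_card hIL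
  refine hIX fun J hIJ => ?_
  by_cases hJh : h < J.card
  · exact simesU_of_hval_lt_card hr hmono hJh
  set k := z - (m - h) + 1
  have hkJ : k ≤ J.card := by have := card_le_card hIJ; omega
  let a : Fin m := ⟨z - 1, by omega⟩
  have hJa : pOrd p J k ≤ p (r a) := by
    refine pOrd_le_of_le_card_inter_Lset hmono (by omega) ?_
    rw [show (a : ℕ) + 1 = z by simp only [a]; omega]
    have := card_le_card (subset_inter hIJ hIL)
    omega
  have hza : pOrd p univ z = p (r a) := pOrd_univ hr hmono (by omega) hzm (by simp only [a]; omega)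
  refine ⟨k, by omega, hkJ, ?_⟩
  have hk : (k : ℝ) = (z : ℝ) - m + h + 1 := by
    push_cast [k, Nat.cast_sub hz1, Nat.cast_sub hhm]
    ring
  have hJ : (J.card : ℝ) ≤ h := by exact_mod_cast not_lt.1 hJh
  calc (J.card : ℝ) * pOrd p J k ≤ h * p (r a) :=
        mul_le_mul hJ hJa (pOrd_nonneg hp (by omega) hkJ) (Nat.cast_nonneg h)
    _ ≤ k * α := by rw [hk, ← hza]; exact hz

theorem le_tval_Lset_zval_erase (hp : ∀ i, 0 ≤ p i) (hr : Function.Bijective r)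
    (hmono : Monotone (p ∘ r)) (hhm : hval α p r < m) (x : Fin m) :
    zval α p r - (m - hval α p r) ≤ tval α p ((Lset r (zval α p r)).erase x) := by
  set h := hval α p r
  set z := zval α p r
  obtain ⟨hz1, hzm, -⟩ := zval_spec hp hr hmono hhm
  set D := Lset r z \ Lset r (m - (h + 1))
  obtain ⟨y, hyD, hxy⟩ : ∃ y ∈ D, x ∉ D.erase y := by
    by_cases hxD : x ∈ D
    · exact ⟨x, hxD, notMem_erase x D⟩
    · refine ⟨r ⟨m - (h + 1), by omega⟩, ?_, fun hx => hxD (mem_of_mem_erase hx)⟩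
      exact mem_sdiff.2 ⟨mem_Lset.2 ⟨_, by simp only; omega, rfl⟩,
        fun hy => by obtain ⟨j, hj, hjy⟩ := mem_Lset.1 hy; cases hr.injective hjy; simp at hj⟩
  have hDK : D.erase y ⊆ (Kset r (h + 1)).erase y := by
    rw [Kset_eq_compl_Lset hr]
    exact erase_subset_erase _ fun w hw => mem_compl.2 (mem_sdiff.1 hw).2
  have hnot : ¬ ClosedX α p (D.erase y) := fun hC =>
    not_simesU_Kset_succ_erase hr hmono hhm (hval_spec α p r).2
      (fun i hi hiz => lt_mul_pOrd_of_lt_zval hhm hi hiz hzm) (mem_sdiff.1 hyD).1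
      (mem_sdiff.1 hyD).2 (hC _ hDK)
  have hcard : (D.erase y).card = z - (m - h) := by
    rw [card_erase_of_mem hyD, card_sdiff_of_subset (Lset_mono (by omega)),
      card_Lset hr.injective hzm, card_Lset hr.injective (by omega)]
    omega
  refine hcard ▸ card_le_tval (fun w hw => mem_erase.2 ⟨?_, ?_⟩) hnot
  · rintro rfl
    exact hxy hw
  · exact (mem_sdiff.1 (mem_of_mem_erase hw)).1

theorem dval_Lset_zval_erase_lt (hp : ∀ i, 0 ≤ p i) (hr : Function.Bijective r)
    (hmono : Monotone (p ∘ r)) {x : Fin m} (hx : x ∈ Lset r (zval α p r)) :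
    dval α p ((Lset r (zval α p r)).erase x) < dval α p (Lset r (zval α p r)) := by
  have hhm : hval α p r < m := by
    refine lt_of_le_of_ne (hval_spec α p r).1 fun hh => ?_
    rw [zval, if_pos hh] at hx
    simp [Lset] at hx
  obtain ⟨hz1, hzm, hz⟩ := zval_spec hp hr hmono hhm
  have hup := tval_Lset_le hp hr hmono hz1 hzm hz
  have hlow := le_tval_Lset_zval_erase hp hr hmono hhm x
  have hZ := card_Lset hr.injective hzm
  have hxZ := card_erase_of_mem hx
  unfold dval
  omega

end Concentration

theorem stmt8_general
    (m : ℕ) (α : ℝ)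
    (p : Fin m → ℝ) (hp : ∀ i, 0 ≤ p i ∧ p i ≤ 1)
    (r : Fin m → Fin m) (hr : Function.Bijective r)
    (hmono : ∀ i j : Fin m, i ≤ j → p (r i) ≤ p (r j))
    (Y : Finset (Fin m)) (hY : ∀ S, dval α p S = dval α p (S ∩ Y)) :
    Lset r (zval α p r) ⊆ Y := fun _ hx =>
  mem_of_dval_erase_lt (hY _) (dval_Lset_zval_erase_lt (fun i => (hp i).1) hr hmono hx)

theorem stmt8
    (m : ℕ) (hm : 1 ≤ m) (α : ℝ) (hα : 0 ≤ α ∧ α ≤ 1)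
    (p : Fin m → ℝ) (hp : ∀ i, 0 ≤ p i ∧ p i ≤ 1)
    (r : Fin m → Fin m) (hr : Function.Bijective r)
    (hmono : ∀ i j : Fin m, i ≤ j → p (r i) ≤ p (r j))
    (Y : Finset (Fin m)) (hY : ∀ S, dval α p S = dval α p (S ∩ Y)) :
    Lset r (zval α p r) ⊆ Y :=
  stmt8_general m α p hp r hr hmono Y hY
end

section
/- Let F be the set of weakly increasing functions from [0,1] to [0,1], equipped with the supremum norm, let α ∈ (0,1], and define φ(f) = inf_{0 ≤ x < 1} (1 − f(xα))/(1 − x) for f ∈ F. If f ∈ F satisfies f(α) < 1, then φ is continuous at f: for every ε > 0 there exists δ > 0 such that every g ∈ F with sup_{x ∈ [0,1]} |g(x) − f(x)| < δ satisfies |φ(g) − φ(f)| < ε. -/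
/-- `φ(f) = inf_{0 ≤ x < 1} (1 − f(xα))/(1 − x)`. -/
noncomputable def phi (α : ℝ) (f : ℝ → ℝ) : ℝ :=
  sInf ((fun x => (1 - f (x * α)) / (1 - x)) '' Set.Ico 0 1)

/-!
Put `c = (1 - f α) / 2`. If `|g - f| ≤ δ ≤ c`, monotonicity of `f` gives `f, g ≤ 1 - c` on
`[0, α]`. For `1 - x < c` both quotients `(1 - h (x α)) / (1 - x)` then exceed `1 ≥ φ`, so such
`x` do not matter, while for `1 - x ≥ c` the quotients of `f` and `g` differ by at most `δ / c`.
Hence `|φ g - φ f| ≤ δ / c`.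
-/

open Set

section Phi

variable {α : ℝ} {f g : ℝ → ℝ}

lemma mul_mem_Icc_of_mem_Ico (hα₀ : 0 ≤ α) {x : ℝ} (hx : x ∈ Ico 0 1) :
    x * α ∈ Icc 0 α :=
  ⟨mul_nonneg hx.1 hα₀, mul_le_of_le_one_left hα₀ hx.2.le⟩

lemma phi_le_div (hα₀ : 0 ≤ α) (hα₁ : α ≤ 1) (hf : MapsTo f (Icc 0 1) (Icc 0 1))
    {x : ℝ} (hx : x ∈ Ico 0 1) : phi α f ≤ (1 - f (x * α)) / (1 - x) := by
  refine csInf_le ⟨0, ?_⟩ ⟨x, hx, rfl⟩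
  rintro _ ⟨y, hy, rfl⟩
  have hyα := Icc_subset_Icc_right hα₁ (mul_mem_Icc_of_mem_Ico hα₀ hy)
  exact div_nonneg (sub_nonneg.2 (hf hyα).2) (sub_nonneg.2 hy.2.le)

lemma phi_le_one (hα₀ : 0 ≤ α) (hα₁ : α ≤ 1) (hf : MapsTo f (Icc 0 1) (Icc 0 1)) :
    phi α f ≤ 1 := by
  have h := phi_le_div hα₀ hα₁ hf (x := 0) ⟨le_rfl, one_pos⟩
  rw [zero_mul, sub_zero, div_one] at h
  linarith [(hf (left_mem_Icc.2 zero_le_one)).1]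

lemma phi_sub_div_le_phi {c δ : ℝ} (hα₀ : 0 ≤ α) (hα₁ : α ≤ 1)
    (hf : MapsTo f (Icc 0 1) (Icc 0 1)) (hc : 0 < c) (hg : ∀ y ∈ Icc 0 α, g y ≤ 1 - c)
    (hfg : ∀ y ∈ Icc 0 α, |g y - f y| ≤ δ) :
    phi α f - δ / c ≤ phi α g := by
  have hδ : 0 ≤ δ := (abs_nonneg _).trans (hfg 0 (left_mem_Icc.2 hα₀))
  refine le_csInf ⟨_, 0, ⟨le_rfl, one_pos⟩, rfl⟩ ?_
  rintro _ ⟨x, hx, rfl⟩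
  have hx₁ : 0 < 1 - x := sub_pos.2 hx.2
  have hxα := mul_mem_Icc_of_mem_Ico hα₀ hx
  rcases le_or_gt c (1 - x) with hfar | hnear
  · calc phi α f - δ / c
        ≤ (1 - f (x * α)) / (1 - x) - δ / (1 - x) :=
          sub_le_sub (phi_le_div hα₀ hα₁ hf hx) (div_le_div_of_nonneg_left hδ hc hfar)
      _ = (1 - (f (x * α) + δ)) / (1 - x) := by ring
      _ ≤ (1 - g (x * α)) / (1 - x) := by
          gcongr
          linarith [(abs_le.1 (hfg _ hxα)).2]
  · have hbig : 1 < (1 - g (x * α)) / (1 - x) := by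
      rw [one_lt_div hx₁]
      linarith [hg _ hxα]
    linarith [phi_le_one hα₀ hα₁ hf, div_nonneg hδ hc.le]

lemma abs_sub_le_sSup_of_mapsTo {s : Set ℝ} (hf : MapsTo f s (Icc 0 1))
    (hg : MapsTo g s (Icc 0 1)) {y : ℝ} (hy : y ∈ s) :
    |g y - f y| ≤ sSup ((fun x => |g x - f x|) '' s) := by
  refine le_csSup ⟨1, ?_⟩ ⟨y, hy, rfl⟩
  rintro _ ⟨x, hx, rfl⟩
  exact abs_sub_le_of_nonneg_of_le (hg hx).1 (hg hx).2 (hf hx).1 (hf hx).2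

end Phi

theorem stmt16 (α : ℝ) (hα : 0 < α ∧ α ≤ 1)
    (f : ℝ → ℝ) (hfmono : MonotoneOn f (Set.Icc 0 1))
    (hfmaps : Set.MapsTo f (Set.Icc 0 1) (Set.Icc 0 1))
    (hfα : f α < 1) :
    ∀ ε : ℝ, 0 < ε → ∃ δ : ℝ, 0 < δ ∧
      ∀ g : ℝ → ℝ, MonotoneOn g (Set.Icc 0 1) →
        Set.MapsTo g (Set.Icc 0 1) (Set.Icc 0 1) →
        sSup ((fun x => |g x - f x|) '' Set.Icc 0 1) < δ →
        |phi α g - phi α f| < ε := by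
  intro ε hε
  obtain ⟨hα₀, hα₁⟩ := hα
  set c := (1 - f α) / 2 with hc_def
  have hc : 0 < c := by linarith
  set δ := min c (ε * c / 2)
  refine ⟨δ, by positivity, fun g _ hgmaps hsup => ?_⟩
  have hfg : ∀ y ∈ Icc 0 α, |g y - f y| ≤ δ := fun y hy =>
    (abs_sub_le_sSup_of_mapsTo hfmaps hgmaps (Icc_subset_Icc_right hα₁ hy)).trans hsup.le
  have hfα' : ∀ y ∈ Icc 0 α, f y ≤ 1 - 2 * c := fun y hy =>
    (hfmono (Icc_subset_Icc_right hα₁ hy) ⟨hα₀.le, hα₁⟩ hy.2).trans (by linarith)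
  have hf : ∀ y ∈ Icc 0 α, f y ≤ 1 - c := fun y hy => by linarith [hfα' y hy]
  have hg : ∀ y ∈ Icc 0 α, g y ≤ 1 - c := fun y hy => by
    linarith [(abs_le.1 (hfg y hy)).2, hfα' y hy, min_le_left c (ε * c / 2)]
  have hφg := phi_sub_div_le_phi hα₀.le hα₁ hfmaps hc hg hfg
  have hφf := phi_sub_div_le_phi hα₀.le hα₁ hgmaps hc hf fun y hy =>
    abs_sub_comm (f y) (g y) ▸ hfg y hy
  have hδc : δ / c ≤ ε / 2 := by
    rw [div_le_iff₀ hc]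
    linarith [min_le_right c (ε * c / 2)]
  rw [abs_sub_lt_iff]
  constructor <;> linarith
end
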